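/- For every spherically symmetric continuous function h on ℝ⁶ and every x ∈ ℝ³∖{0} (r=|x|), ( ∫_{ℝ³} |φ'(E(x,v))| w h(x,v) dv )² ≤ (e^{−2λ₀(r)−μ₀(r)}/(4πγ²r)) (λ₀'(r)+μ₀'(r)) ∫_{ℝ³} |φ'(E(x,v))| h(x,v)² dv. -/

import Mathlib

noncomputable section

open Real MeasureTheory

abbrev E3 := EuclideanSpace ℝ (Fin 3)

/-- Euclidean dot product on `E3`. -/
def dot3 (x v : E3) : ℝ := ∑ i, x i * v i

/-- `⟨v⟩ = √(1+γ|v|²)`. -/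
def jap (γ : ℝ) (v : E3) : ℝ := Real.sqrt (1 + γ * ‖v‖ ^ 2)

/-- The radial momentum `w = (x·v)/|x|`. -/
def wrad (x v : E3) : ℝ := dot3 x v / ‖x‖

/-- The particle energy `E(x,v) = e^{μ₀(|x|)}⟨v⟩`. -/
def energy (γ : ℝ) (μ₀ : ℝ → ℝ) (z : E3 × E3) : ℝ :=
  Real.exp (μ₀ ‖z.1‖) * jap γ z.2

/-- The Poisson bracket `{f,g} = ∂ₓf·∂ᵥg − ∂ᵥf·∂ₓg`. -/
def pb (f g : E3 × E3 → ℝ) (z : E3 × E3) : ℝ :=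
  ∑ i : Fin 3,
    (fderiv ℝ f z (EuclideanSpace.single i 1, 0) * fderiv ℝ g z (0, EuclideanSpace.single i 1)
     - fderiv ℝ f z (0, EuclideanSpace.single i 1) * fderiv ℝ g z (EuclideanSpace.single i 1, 0))

/-- Action of a `3×3` matrix on `E3`. -/
def matAct (A : Matrix (Fin 3) (Fin 3) ℝ) (x : E3) : E3 :=
  (WithLp.equiv 2 (Fin 3 → ℝ)).symm (A.mulVec ((WithLp.equiv 2 (Fin 3 → ℝ)) x))

/-- Spherical symmetry: invariance under the canonical action of SO(3). -/
def SphSym (h : E3 × E3 → ℝ) : Prop :=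
  ∀ A : Matrix (Fin 3) (Fin 3) ℝ, A ∈ Matrix.orthogonalGroup (Fin 3) ℝ → A.det = 1 →
    ∀ x v : E3, h (matAct A x, matAct A v) = h (x, v)

/-- Radial unit vector, used to define radial representatives of
spherically symmetric quantities. -/
def er : E3 := EuclideanSpace.single 0 1

/-- The steady state distribution `f₀ = φ(E)`. -/
def f0 (γ : ℝ) (μ₀ φ : ℝ → ℝ) : E3 × E3 → ℝ := fun z => φ (energy γ μ₀ z)

/-- The steady state energy density `ρ₀(r) = ∫ ⟨v⟩ f₀ dv`. -/
def rho0 (γ : ℝ) (μ₀ φ : ℝ → ℝ) (r : ℝ) : ℝ :=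
  ∫ v : E3, jap γ v * f0 γ μ₀ φ (r • er, v)

/-- The steady state radial pressure `p₀(r) = ∫ (w²/⟨v⟩) f₀ dv`. -/
def p0 (γ : ℝ) (μ₀ φ : ℝ → ℝ) (r : ℝ) : ℝ :=
  ∫ v : E3, ((wrad (r • er) v) ^ 2 / jap γ v) * f0 γ μ₀ φ (r • er, v)

/-- The static Einstein field equations for a steady state `(f₀,lam0,μ₀)`. -/
def FieldEqs (γ : ℝ) (lam0 μ₀ φ : ℝ → ℝ) : Prop :=
  (∀ r > 0, Real.exp (-2 * lam0 r) * (2 * r * deriv lam0 r - 1) + 1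
      = 8 * π * γ * r ^ 2 * rho0 γ μ₀ φ r) ∧
  (∀ r > 0, Real.exp (-2 * lam0 r) * (2 * r * deriv μ₀ r + 1) - 1
      = 8 * π * γ ^ 2 * r ^ 2 * p0 γ μ₀ φ r)

/-- The linearly dynamically accessible perturbation generated by `h`. -/
def deltaF (γ : ℝ) (lam0 μ₀ φ : ℝ → ℝ) (h : E3 × E3 → ℝ) : E3 × E3 → ℝ :=
  fun z =>
    Real.exp (-lam0 ‖z.1‖) * pb h (f0 γ μ₀ φ) z
    + 4 * π * γ ^ 3 * ‖z.1‖ * Real.exp (2 * μ₀ ‖z.1‖ + lam0 ‖z.1‖) *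
        deriv φ (energy γ μ₀ z) * ((wrad z.1 z.2) ^ 2 / jap γ z.2) *
        ∫ vt : E3, deriv φ (energy γ μ₀ (z.1, vt)) * h (z.1, vt) * wrad z.1 vt

/-- `δρ(s) = ∫ ⟨v⟩ δf dv` at radius `s`. -/
def deltaRho (γ : ℝ) (δf : E3 × E3 → ℝ) (s : ℝ) : ℝ :=
  ∫ v : E3, jap γ v * δf (s • er, v)

/-- The induced metric perturbation `δλ(r) = γ e^{2lam0} (4π/r) ∫₀^r s² δρ(s) ds`. -/
def deltaLambda (γ : ℝ) (lam0 : ℝ → ℝ) (δf : E3 × E3 → ℝ) (r : ℝ) : ℝ :=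
  γ * Real.exp (2 * lam0 r) * (4 * π / r) * ∫ s in (0:ℝ)..r, s ^ 2 * deltaRho γ δf s

/-! Cauchy–Schwarz with the weight `|φ'(E)|` bounds the left side by
`(∫ |φ'(E)| w² dv) (∫ |φ'(E)| h² dv)`. The first factor is explicit: the derivative of
`w ⟨v⟩ φ(E)` in the direction `x/r` is `⟨v⟩ φ(E) + γ w² φ(E)/⟨v⟩ + γ e^{μ₀} w² φ'(E)`, whose
integral vanishes, and `φ' ≤ 0`, so `γ e^{μ₀} ∫ |φ'(E)| w² dv = ρ₀ + γ p₀` (a rotation taking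
`x/r` to the first axis identifies the middle term with `γ p₀`). The sum of the two field
equations reads `e^{-2λ₀} 2r (λ₀' + μ₀') = 8πγ r² (ρ₀ + γ p₀)`. -/

theorem sq_integral_mul_le_of_nonneg {α : Type*} [MeasurableSpace α] {μ : Measure α}
    {a f g : α → ℝ} (ha : ∀ x, 0 ≤ a x) (hf : Integrable (fun x => a x * f x ^ 2) μ)
    (hg : Integrable (fun x => a x * g x ^ 2) μ) (hfg : Integrable (fun x => a x * f x * g x) μ) :
    (∫ x, a x * f x * g x ∂μ) ^ 2 ≤ (∫ x, a x * f x ^ 2 ∂μ) * ∫ x, a x * g x ^ 2 ∂μ := by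
  have hquad : ∀ t : ℝ, 0 ≤ (∫ x, a x * f x ^ 2 ∂μ) * (t * t)
      + 2 * (∫ x, a x * f x * g x ∂μ) * t + ∫ x, a x * g x ^ 2 ∂μ := by
    intro t
    have hexp : (fun x => a x * (t * f x + g x) ^ 2) = fun x =>
        (t * t) * (a x * f x ^ 2) + ((2 * t) * (a x * f x * g x) + a x * g x ^ 2) := by
      funext x; ring
    have hnonneg : 0 ≤ ∫ x, a x * (t * f x + g x) ^ 2 ∂μ :=
      integral_nonneg fun x => mul_nonneg (ha x) (sq_nonneg _)
    have hcross : Integrable (fun x => (2 * t) * (a x * f x * g x) + a x * g x ^ 2) μ :=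
      (hfg.const_mul _).add hg
    rw [hexp, integral_add (hf.const_mul _) hcross, integral_add (hfg.const_mul _) hg,
      integral_const_mul, integral_const_mul] at hnonneg
    linarith
  have hdiscrim := discrim_le_zero hquad
  rw [discrim] at hdiscrim
  linarith

theorem integral_eq_zero_of_hasLineDerivAt {E : Type*} [NormedAddCommGroup E] [NormedSpace ℝ E]
    [FiniteDimensional ℝ E] [MeasurableSpace E] [BorelSpace E] {μ : Measure E}
    [μ.IsAddHaarMeasure] {g g' : E → ℝ} {u : E} (hderiv : ∀ x, HasLineDerivAt ℝ g (g' x) x u)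
    (hg : Integrable g μ) (hg' : Integrable g' μ) :
    ∫ x, g' x ∂μ = 0 := by
  simpa using integral_bilinear_hasLineDerivAt_right_eq_neg_left_of_integrable
    (f := fun _ => (1 : ℝ)) (f' := fun _ => 0) (B := ContinuousLinearMap.mul ℝ ℝ) (μ := μ)
    (by simp) (by simpa using hg') (by simpa using hg)
    (fun x _ => (hasFDerivAt_const (1 : ℝ) x).hasLineDerivAt u) (fun x _ => hderiv x)

theorem integral_inner_norm_eq {E : Type*} [NormedAddCommGroup E] [InnerProductSpace ℝ E]
    [FiniteDimensional ℝ E] [MeasurableSpace E] [BorelSpace E] {u u' : E} (h : ‖u‖ = ‖u'‖)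
    (F : ℝ → ℝ → ℝ) :
    ∫ v, F (inner ℝ u v) ‖v‖ = ∫ v, F (inner ℝ u' v) ‖v‖ := by
  set A := (Submodule.reflection (ℝ ∙ (u - u'))ᗮ : E ≃ₗᵢ[ℝ] E)
  have hA : A u = u' := Submodule.reflection_sub h
  rw [← A.measurePreserving.integral_comp A.toHomeomorph.measurableEmbedding
    (fun v => F (inner ℝ u' v) ‖v‖)]
  congr 1 with v
  rw [← hA, A.inner_map_map, A.norm_map]

theorem deriv_eq_zero_of_lt {φ : ℝ → ℝ} {E₀ s : ℝ} (hφzero : ∀ t, E₀ ≤ t → φ t = 0)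
    (hs : E₀ < s) : deriv φ s = 0 := by
  have hev : φ =ᶠ[nhds s] fun _ => 0 := by
    filter_upwards [Ioi_mem_nhds hs] with t ht using hφzero t ht.le
  rw [hev.deriv_eq, deriv_const]

theorem deriv_nonpos_of_deriv_neg {φ : ℝ → ℝ} {E₀ : ℝ} (hφ' : Continuous (deriv φ))
    (hφzero : ∀ s, E₀ ≤ s → φ s = 0) (hφdec : ∀ s, s < E₀ → deriv φ s < 0) (s : ℝ) :
    deriv φ s ≤ 0 := by
  have hoff : ({E₀}ᶜ : Set ℝ) ⊆ {t | deriv φ t ≤ 0} := fun t ht =>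
    (Ne.lt_or_gt ht).elim (fun h => (hφdec t h).le) fun h => (deriv_eq_zero_of_lt hφzero h).le
  exact (isClosed_le hφ' continuous_const).closure_subset_iff.2 hoff
    ((dense_compl_singleton E₀).closure_eq ▸ Set.mem_univ s)

section Jap

variable {γ : ℝ}

theorem jap_pos (hγ : 0 ≤ γ) (v : E3) : 0 < jap γ v :=
  Real.sqrt_pos.2 (by positivity)

theorem continuous_jap : Continuous (jap γ) := by
  unfold jap; fun_prop

theorem sqrt_mul_norm_le_jap (hγ : 0 ≤ γ) (v : E3) : √γ * ‖v‖ ≤ jap γ v := by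
  rw [← Real.sqrt_sq (norm_nonneg v), ← Real.sqrt_mul hγ]
  exact Real.sqrt_le_sqrt (by linarith)

theorem hasFDerivAt_jap (hγ : 0 ≤ γ) (v : E3) :
    HasFDerivAt (jap γ) ((γ / jap γ v) • innerSL ℝ v) v := by
  have h := (((hasStrictFDerivAt_norm_sq v).hasFDerivAt.const_mul γ).const_add 1).sqrt
    (by positivity : 1 + γ * ‖v‖ ^ 2 ≠ 0)
  refine h.congr_fderiv ?_
  ext w
  simp only [one_div, mul_inv_rev, smul_apply, coe_innerSL_apply, nsmul_eq_mul, Nat.cast_ofNat,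
    smul_eq_mul, jap]
  field_simp

variable {c E₀ : ℝ} {ψ : ℝ → ℝ}

theorem hasCompactSupport_comp_jap_mul (hγ : 0 < γ) (hc : 0 < c)
    (hψ : ∀ s, E₀ < s → ψ s = 0) (G : E3 → ℝ) :
    HasCompactSupport fun v => ψ (c * jap γ v) * G v := by
  refine HasCompactSupport.intro (isCompact_closedBall 0 (E₀ / (c * √γ))) fun v hv => ?_
  rw [Metric.mem_closedBall, dist_zero_right, not_le, div_lt_iff₀ (by positivity)] at hv
  have := sqrt_mul_norm_le_jap hγ.le v
  rw [hψ _ (by nlinarith), zero_mul]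

theorem integrable_comp_jap_mul (hγ : 0 < γ) (hc : 0 < c) (hψc : Continuous ψ)
    (hψ : ∀ s, E₀ < s → ψ s = 0) {G : E3 → ℝ} (hG : Continuous G) :
    Integrable fun v => ψ (c * jap γ v) * G v :=
  ((hψc.comp (continuous_const.mul continuous_jap)).mul hG).integrable_of_hasCompactSupport
    (hasCompactSupport_comp_jap_mul hγ hc hψ G)

variable {φ : ℝ → ℝ} {u : E3}

theorem hasLineDerivAt_comp_jap_mul_inner (hγ : 0 ≤ γ) (hφ : Differentiable ℝ φ)
    (hu : ‖u‖ = 1) (v : E3) :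
    HasLineDerivAt ℝ (fun v => φ (c * jap γ v) * (inner ℝ u v * jap γ v))
      (γ * c * (deriv φ (c * jap γ v) * inner ℝ u v ^ 2)
        + (φ (c * jap γ v) * jap γ v + γ * (φ (c * jap γ v) * (inner ℝ u v ^ 2 / jap γ v))))
      v u := by
  have hJ := hasFDerivAt_jap hγ v
  have hφJ := (hφ (c * jap γ v)).hasDerivAt.comp_hasFDerivAt v (hJ.const_mul c)
  have h := (hφJ.mul (((innerSL ℝ u).hasFDerivAt).mul hJ)).hasLineDerivAt u
  refine HasDerivAt.congr_deriv h ?_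
  have hJ0 := (jap_pos hγ v).ne'
  simp only [Function.comp_apply, Pi.mul_apply, FunLike.coe_add, FunLike.coe_smul,
    Pi.add_apply, Pi.smul_apply, coe_innerSL_apply, smul_eq_mul, real_inner_self_eq_norm_sq, hu,
    real_inner_comm v u]
  field_simp
  ring

theorem integral_deriv_comp_jap_mul_inner_sq (hγ : 0 < γ) (hc : 0 < c) (hφ : ContDiff ℝ 1 φ)
    (hφzero : ∀ s, E₀ ≤ s → φ s = 0) (hu : ‖u‖ = 1) :
    γ * c * ∫ v, deriv φ (c * jap γ v) * inner ℝ u v ^ 2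
      = -((∫ v, φ (c * jap γ v) * jap γ v)
          + γ * ∫ v, φ (c * jap γ v) * (inner ℝ u v ^ 2 / jap γ v)) := by
  have hφ0 : ∀ s, E₀ < s → φ s = 0 := fun s hs => hφzero s hs.le
  have hφ'0 : ∀ s, E₀ < s → deriv φ s = 0 := fun s hs => deriv_eq_zero_of_lt hφzero hs
  have hin : Continuous fun v : E3 => inner ℝ u v := continuous_const.inner continuous_id
  have hJ0 : ∀ v, jap γ v ≠ 0 := fun v => (jap_pos hγ.le v).ne'
  have h1 : Integrable fun v => deriv φ (c * jap γ v) * inner ℝ u v ^ 2 :=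
    integrable_comp_jap_mul hγ hc (hφ.continuous_deriv le_rfl) hφ'0 (hin.pow 2)
  have h2 : Integrable fun v => φ (c * jap γ v) * jap γ v :=
    integrable_comp_jap_mul hγ hc hφ.continuous hφ0 continuous_jap
  have h3 : Integrable fun v => φ (c * jap γ v) * (inner ℝ u v ^ 2 / jap γ v) :=
    integrable_comp_jap_mul hγ hc hφ.continuous hφ0 ((hin.pow 2).div continuous_jap hJ0)
  have hg : Integrable fun v => φ (c * jap γ v) * (inner ℝ u v * jap γ v) :=
    integrable_comp_jap_mul hγ hc hφ.continuous hφ0 (hin.mul continuous_jap)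
  have h23 : Integrable fun v =>
      φ (c * jap γ v) * jap γ v + γ * (φ (c * jap γ v) * (inner ℝ u v ^ 2 / jap γ v)) :=
    h2.add (h3.const_mul γ)
  have hzero := integral_eq_zero_of_hasLineDerivAt
    (hasLineDerivAt_comp_jap_mul_inner hγ.le (hφ.differentiable one_ne_zero) hu) hg
    ((h1.const_mul (γ * c)).add h23)
  rw [integral_add (h1.const_mul _) h23, integral_add h2 (h3.const_mul γ),
    integral_const_mul, integral_const_mul] at hzero
  linarith

end Jap

theorem dot3_eq_inner (x v : E3) : dot3 x v = inner ℝ x v := by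
  simp [dot3, PiLp.inner_apply, mul_comm]

theorem wrad_eq_inner (x v : E3) : wrad x v = inner ℝ (‖x‖⁻¹ • x) v := by
  rw [wrad, dot3_eq_inner, real_inner_smul_left, div_eq_inv_mul]

theorem norm_er : ‖er‖ = 1 := by
  simp [er]

theorem norm_smul_er {r : ℝ} (hr : 0 ≤ r) : ‖r • er‖ = r := by
  rw [norm_smul, norm_er, mul_one, Real.norm_of_nonneg hr]

theorem rho0_eq {γ r : ℝ} {μ₀ φ : ℝ → ℝ} (hr : 0 ≤ r) :
    rho0 γ μ₀ φ r = ∫ v, φ (exp (μ₀ r) * jap γ v) * jap γ v := by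
  unfold rho0 f0 energy
  simp only [norm_smul_er hr, mul_comm (jap γ _)]

theorem p0_eq {γ r : ℝ} {μ₀ φ : ℝ → ℝ} (hr : 0 < r) :
    p0 γ μ₀ φ r = ∫ v, φ (exp (μ₀ r) * jap γ v) * (inner ℝ er v ^ 2 / jap γ v) := by
  unfold p0 f0 energy
  simp only [wrad_eq_inner, norm_smul_er hr.le, inv_smul_smul₀ hr.ne', mul_comm (_ / jap γ _)]

theorem integral_abs_deriv_mul_inner_sq {γ r E₀ : ℝ} {μ₀ φ : ℝ → ℝ} (hγ : 0 < γ) (hr : 0 < r)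
    (hφ : ContDiff ℝ 1 φ) (hφzero : ∀ s, E₀ ≤ s → φ s = 0)
    (hφdec : ∀ s, s < E₀ → deriv φ s < 0) {u : E3} (hu : ‖u‖ = 1) :
    ∫ v, |deriv φ (exp (μ₀ r) * jap γ v)| * inner ℝ u v ^ 2
      = (rho0 γ μ₀ φ r + γ * p0 γ μ₀ φ r) / (γ * exp (μ₀ r)) := by
  have hsign : ∀ s, |deriv φ s| = -deriv φ s := fun s =>
    abs_of_nonpos (deriv_nonpos_of_deriv_neg (hφ.continuous_deriv le_rfl) hφzero hφdec s)
  have hp : p0 γ μ₀ φ r = ∫ v, φ (exp (μ₀ r) * jap γ v) * (inner ℝ u v ^ 2 / jap γ v) := by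
    rw [p0_eq hr]
    exact integral_inner_norm_eq (norm_er.trans hu.symm)
      fun a b => φ (exp (μ₀ r) * √(1 + γ * b ^ 2)) * (a ^ 2 / √(1 + γ * b ^ 2))
  have hibp := integral_deriv_comp_jap_mul_inner_sq hγ (exp_pos (μ₀ r)) hφ hφzero hu
  simp only [hsign, neg_mul, integral_neg]
  rw [rho0_eq hr.le, hp, eq_div_iff (by positivity)]
  linarith

theorem FieldEqs.exp_div_mul_deriv_add_deriv {γ : ℝ} {lam0 μ₀ φ : ℝ → ℝ}
    (hfe : FieldEqs γ lam0 μ₀ φ) (hγ : γ ≠ 0) {r : ℝ} (hr : 0 < r) :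
    exp (-2 * lam0 r - μ₀ r) / (4 * π * γ ^ 2 * r) * (deriv lam0 r + deriv μ₀ r)
      = (rho0 γ μ₀ φ r + γ * p0 γ μ₀ φ r) / (γ * exp (μ₀ r)) := by
  have hsum := congr_arg₂ (· + ·) (hfe.1 r hr) (hfe.2 r hr)
  rw [sub_eq_add_neg, exp_add, exp_neg]
  field_simp
  rw [neg_mul] at hsum
  refine mul_left_cancel₀ (by positivity : 2 * r ≠ 0) ?_
  linear_combination hsum

theorem weighted_cauchy_schwarz_general
    (γ : ℝ) (hγ : 0 < γ)
    (lam0 mu0 : ℝ → ℝ)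
    (E₀ : ℝ)
    (φ : ℝ → ℝ) (hφ : ContDiff ℝ 1 φ)
    (hφzero : ∀ s, E₀ ≤ s → φ s = 0)
    (hφdec : ∀ s, s < E₀ → deriv φ s < 0)
    (hfe : FieldEqs γ lam0 mu0 φ)
    (h : E3 × E3 → ℝ) (hh : Continuous h)
    (x : E3) (hx : x ≠ 0) :
    (∫ v : E3, |deriv φ (energy γ mu0 (x, v))| * wrad x v * h (x, v)) ^ 2 ≤
      (Real.exp (-2 * lam0 ‖x‖ - mu0 ‖x‖) / (4 * π * γ ^ 2 * ‖x‖)) *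
        (deriv lam0 ‖x‖ + deriv mu0 ‖x‖) *
        ∫ v : E3, |deriv φ (energy γ mu0 (x, v))| * (h (x, v)) ^ 2 := by
  have hr : 0 < ‖x‖ := norm_pos_iff.2 hx
  have hu : ‖‖x‖⁻¹ • x‖ = 1 := by rw [norm_smul, norm_inv, norm_norm, inv_mul_cancel₀ hr.ne']
  have hw : Continuous (wrad x) :=
    (continuous_const.inner continuous_id).congr fun v => (wrad_eq_inner x v).symm
  have hhx : Continuous fun v => h (x, v) := by fun_prop
  have hint : ∀ {G : E3 → ℝ}, Continuous G →
      Integrable fun v => |deriv φ (energy γ mu0 (x, v))| * G v := fun hG =>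
    integrable_comp_jap_mul (ψ := fun s => |deriv φ s|) hγ (exp_pos (mu0 ‖x‖))
      (hφ.continuous_deriv le_rfl).abs
      (fun s hs => by rw [deriv_eq_zero_of_lt hφzero hs, abs_zero]) hG
  calc _ ≤ (∫ v, |deriv φ (energy γ mu0 (x, v))| * wrad x v ^ 2)
        * ∫ v, |deriv φ (energy γ mu0 (x, v))| * h (x, v) ^ 2 :=
      sq_integral_mul_le_of_nonneg (fun v => abs_nonneg _) (hint (hw.pow 2)) (hint (hhx.pow 2))
        (by simpa only [mul_assoc] using hint (G := fun v => wrad x v * h (x, v)) (hw.mul hhx))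
    _ = _ := by
      simp only [energy, wrad_eq_inner]
      rw [integral_abs_deriv_mul_inner_sq hγ hr hφ hφzero hφdec hu,
        hfe.exp_div_mul_deriv_add_deriv hγ.ne' hr]

/-- Lemma 4.3. The weighted Cauchy--Schwarz estimate
`(∫ |φ'(E)| w h dv)² ≤ (e^{−2λ₀−μ₀}/(4πγ²r))(λ₀'+μ₀') ∫ |φ'(E)| h² dv`. -/
theorem weighted_cauchy_schwarz
    (γ : ℝ) (hγ : 0 < γ)
    (lam0 mu0 : ℝ → ℝ) (hlam0 : ContDiff ℝ 1 lam0) (hmu0 : ContDiff ℝ 1 mu0)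
    (E₀ : ℝ) (hE₀ : 0 < E₀)
    (φ : ℝ → ℝ) (hφ : ContDiff ℝ 1 φ)
    (hφzero : ∀ s, E₀ ≤ s → φ s = 0)
    (hφdec : ∀ s, s < E₀ → deriv φ s < 0)
    (hfe : FieldEqs γ lam0 mu0 φ)
    (h : E3 × E3 → ℝ) (hh : Continuous h) (hsym : SphSym h)
    (x : E3) (hx : x ≠ 0) :
    (∫ v : E3, |deriv φ (energy γ mu0 (x, v))| * wrad x v * h (x, v)) ^ 2 ≤
      (Real.exp (-2 * lam0 ‖x‖ - mu0 ‖x‖) / (4 * π * γ ^ 2 * ‖x‖)) *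
        (deriv lam0 ‖x‖ + deriv mu0 ‖x‖) *
        ∫ v : E3, |deriv φ (energy γ mu0 (x, v))| * (h (x, v)) ^ 2 :=
  weighted_cauchy_schwarz_general γ hγ lam0 mu0 E₀ φ hφ hφzero hφdec hfe h hh x hx
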